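/- arXiv:2009.03167 — 7 statements merged into one kernel-verified Lean document; each statement's English description precedes it below -/
import Mathlib

section
/- Let (A_t)_{t∈ℕ} be an adapted sequence of events in a filtered probability space and let A_∞ := limsup_{t→∞} A_t. Then the following are equivalent: (i) P(⋃_{t∈ℕ} A_t) ≤ α; (ii) sup_T P(A_T) ≤ α, where T ranges over all random times (possibly infinite, not necessarily stopping times); (iii) sup_τ P(A_τ) ≤ α, where τ ranges over all stopping times (possibly infinite). -/
open MeasureTheory Filter
open scoped ENNReal

/-- The event `A_T` associated with a random time `T : Ω → ℕ∞`:
`⋃_{t∈ℕ} (A_t ∩ {T = t}) ∪ (A_∞ ∩ {T = ∞})`, where `A_∞ := limsup A_t`. -/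
def evAt {Ω : Type*} (A : ℕ → Set Ω) (T : Ω → ℕ∞) : Set Ω :=
  {ω | (∃ t : ℕ, T ω = (t : ℕ∞) ∧ ω ∈ A t) ∨ (T ω = ⊤ ∧ ω ∈ Filter.limsup A Filter.atTop)}

lemma evAt_subset {Ω : Type*} (A : ℕ → Set Ω) (T : Ω → ℕ∞) :
    evAt A T ⊆ ⋃ t, A t := by
  rintro ω (⟨t, _, ht⟩ | ⟨_, hω⟩)
  · exact Set.mem_iUnion.2 ⟨t, ht⟩
  · rw [Filter.mem_limsup_iff_frequently_mem] at hω
    obtain ⟨t, ht⟩ := hω.exists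
    exact Set.mem_iUnion.2 ⟨t, ht⟩

/-- Equivalence lemma: for an adapted sequence of events `(A_t)`, the following are
equivalent: (i) `P(⋃ A_t) ≤ α`; (ii) `P(A_T) ≤ α` for all random times `T` (possibly
infinite, not necessarily stopping times); (iii) `P(A_τ) ≤ α` for all stopping times `τ`
(possibly infinite). -/
theorem equivalence_lemma {Ω : Type*} {m0 : MeasurableSpace Ω}
    (μ : Measure Ω) [IsProbabilityMeasure μ] (ℱ : Filtration ℕ m0)
    (A : ℕ → Set Ω) (hA : ∀ t, MeasurableSet[ℱ t] (A t)) (α : ℝ≥0∞) :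
    (μ (⋃ t, A t) ≤ α ↔
      ∀ T : Ω → ℕ∞, (∀ n : ℕ∞, MeasurableSet {ω | T ω = n}) → μ (evAt A T) ≤ α) ∧
    ((∀ T : Ω → ℕ∞, (∀ n : ℕ∞, MeasurableSet {ω | T ω = n}) → μ (evAt A T) ≤ α) ↔
      ∀ τ : Ω → ℕ∞, (∀ t : ℕ, MeasurableSet[ℱ t] {ω | τ ω ≤ (t : ℕ∞)}) →
        μ (evAt A τ) ≤ α) := by
  -- (i) → (ii)
  have h12 : μ (⋃ t, A t) ≤ α →
      ∀ T : Ω → ℕ∞, (∀ n : ℕ∞, MeasurableSet {ω | T ω = n}) → μ (evAt A T) ≤ α := by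
    intro h T _
    exact le_trans (measure_mono (evAt_subset A T)) h
  -- (ii) → (iii)
  have h23 : (∀ T : Ω → ℕ∞, (∀ n : ℕ∞, MeasurableSet {ω | T ω = n}) → μ (evAt A T) ≤ α) →
      ∀ τ : Ω → ℕ∞, (∀ t : ℕ, MeasurableSet[ℱ t] {ω | τ ω ≤ (t : ℕ∞)}) →
        μ (evAt A τ) ≤ α := by
    intro h τ hτ
    have hle : ∀ t : ℕ, MeasurableSet {ω | τ ω ≤ (t : ℕ∞)} := fun t => ℱ.le t _ (hτ t)
    apply h τ
    intro n
    induction n using ENat.recTopCoe with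
    | top =>
      have : {ω | τ ω = ⊤} = (⋃ t : ℕ, {ω | τ ω ≤ (t : ℕ∞)})ᶜ := by
        ext ω
        simp only [Set.mem_compl_iff, Set.mem_iUnion, Set.mem_setOf_eq, not_exists]
        constructor
        · intro h' t
          rw [h']
          simp
        · intro h'
          by_contra hne
          obtain ⟨t, ht⟩ := WithTop.ne_top_iff_exists.1 hne
          exact h' t (le_of_eq ht.symm)
      rw [this]
      exact (MeasurableSet.iUnion fun t => hle t).compl
    | coe t =>
      have : {ω | τ ω = (t : ℕ∞)} = {ω | τ ω ≤ (t : ℕ∞)} \ ⋃ s : ℕ, ⋃ _ : s < t, {ω | τ ω ≤ (s : ℕ∞)} := by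
        ext ω
        simp only [Set.mem_diff, Set.mem_iUnion, Set.mem_setOf_eq, not_exists]
        constructor
        · intro h'
          refine ⟨le_of_eq h', fun s hs hle' => ?_⟩
          rw [h'] at hle'
          exact absurd (Nat.cast_le.mp hle') (not_le.2 hs)
        · rintro ⟨h1, h2⟩
          rcases lt_or_eq_of_le h1 with hlt | heq
          · exfalso
            have hne : τ ω ≠ ⊤ := ne_top_of_lt hlt
            obtain ⟨s, hs⟩ := WithTop.ne_top_iff_exists.1 hne
            rw [← hs] at hlt
            exact h2 s (Nat.cast_lt.mp hlt) (le_of_eq hs.symm)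
          · exact heq
      rw [this]
      exact (hle t).diff (MeasurableSet.iUnion fun s => MeasurableSet.iUnion fun _ => hle s)
  -- (iii) → (i)
  have h31 : (∀ τ : Ω → ℕ∞, (∀ t : ℕ, MeasurableSet[ℱ t] {ω | τ ω ≤ (t : ℕ∞)}) →
      μ (evAt A τ) ≤ α) → μ (⋃ t, A t) ≤ α := by
    intro h
    classical
    set τ : Ω → ℕ∞ := fun ω => if h : ∃ t, ω ∈ A t then (Nat.find h : ℕ∞) else ⊤ with hτdef
    have hstop : ∀ t : ℕ, MeasurableSet[ℱ t] {ω | τ ω ≤ (t : ℕ∞)} := by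
      intro t
      have : {ω | τ ω ≤ (t : ℕ∞)} = ⋃ s : ℕ, ⋃ _ : s ≤ t, A s := by
        ext ω
        simp only [Set.mem_setOf_eq, Set.mem_iUnion, hτdef]
        constructor
        · intro h'
          split_ifs at h' with hex
          · exact ⟨Nat.find hex, Nat.cast_le.mp h', Nat.find_spec hex⟩
          · simp at h'
        · rintro ⟨s, hst, hs⟩
          have hex : ∃ t, ω ∈ A t := ⟨s, hs⟩
          rw [dif_pos hex]
          exact Nat.cast_le.mpr (le_trans (Nat.find_le hs) hst)
      rw [this]
      exact MeasurableSet.iUnion fun s => MeasurableSet.iUnion fun hs =>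
        ℱ.mono hs _ (hA s)
    have hsub : (⋃ t, A t) ⊆ evAt A τ := by
      rintro ω hω
      rw [Set.mem_iUnion] at hω
      have hex : ∃ t, ω ∈ A t := hω
      left
      exact ⟨Nat.find hex, by simp [hτdef, dif_pos hex], Nat.find_spec hex⟩
    exact le_trans (measure_mono hsub) (h τ hstop)
  exact ⟨⟨h12, fun h2 => h31 (h23 h2)⟩, ⟨h23, fun h3 T hT => h12 (h31 h3) T hT⟩⟩
end

section
/- If Z is a real-valued random variable whose distribution is symmetric (Z has the same law as −Z) and E[e^{Z − Z²/2}] exists, then E[exp(Z − Z²/2)] ≤ 1. -/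
open MeasureTheory Filter
open scoped ENNReal

/-! Since `Z` and `-Z` have the same law, the expectation of `f(Z)` equals that of the
symmetrization `(f(Z) + f(-Z)) / 2`, and for `f z = exp (z - z²/2)` this symmetrization is
`exp (-z²/2) cosh z ≤ 1` pointwise, because `cosh z ≤ exp (z²/2)`. -/

open ProbabilityTheory

theorem ProbabilityTheory.IdentDistrib.integral_eq_integral_average {Ω : Type*}
    {m0 : MeasurableSpace Ω} {μ : Measure Ω} {Y Y' : Ω → ℝ} (h : IdentDistrib Y Y' μ μ)
    (hY : Integrable Y μ) :
    ∫ ω, Y ω ∂μ = ∫ ω, (Y ω + Y' ω) / 2 ∂μ := by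
  rw [integral_div, integral_add hY (h.integrable_snd hY), ← h.integral_eq]
  ring

theorem Real.exp_sub_sq_div_two_average_le_one (z : ℝ) :
    (Real.exp (z - z ^ 2 / 2) + Real.exp (-z - (-z) ^ 2 / 2)) / 2 ≤ 1 :=
  calc (Real.exp (z - z ^ 2 / 2) + Real.exp (-z - (-z) ^ 2 / 2)) / 2
      = Real.exp (-(z ^ 2 / 2)) * Real.cosh z := by
        rw [Real.cosh_eq, neg_sq, sub_eq_neg_add, sub_eq_neg_add, Real.exp_add, Real.exp_add]
        ring
    _ ≤ Real.exp (-(z ^ 2 / 2)) * Real.exp (z ^ 2 / 2) := by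
        gcongr
        exact Real.cosh_le_exp_half_sq z
    _ = 1 := by rw [← Real.exp_add, neg_add_cancel, Real.exp_zero]

/-- If `Z` is a real random variable with symmetric law (`Z` and `-Z` have the same
distribution) and `exp(Z - Z²/2)` is integrable, then `E[exp(Z - Z²/2)] ≤ 1`. -/
theorem symmetric_exp_expectation_le_one {Ω : Type*} {m0 : MeasurableSpace Ω}
    (μ : Measure Ω) [IsProbabilityMeasure μ] (Z : Ω → ℝ) (hZ : Measurable Z)
    (hsym : Measure.map Z μ = Measure.map (fun ω => -Z ω) μ)
    (hint : Integrable (fun ω => Real.exp (Z ω - (Z ω) ^ 2 / 2)) μ) :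
    ∫ ω, Real.exp (Z ω - (Z ω) ^ 2 / 2) ∂μ ≤ 1 := by
  have hlaw : IdentDistrib Z (fun ω => -Z ω) μ μ :=
    ⟨hZ.aemeasurable, hZ.neg.aemeasurable, hsym⟩
  have hf : IdentDistrib (fun ω => Real.exp (Z ω - Z ω ^ 2 / 2))
      (fun ω => Real.exp (-Z ω - (-Z ω) ^ 2 / 2)) μ μ :=
    hlaw.comp (u := fun z => Real.exp (z - z ^ 2 / 2)) (by fun_prop)
  rw [hf.integral_eq_integral_average hint]
  calc ∫ ω, (Real.exp (Z ω - Z ω ^ 2 / 2) + Real.exp (-Z ω - (-Z ω) ^ 2 / 2)) / 2 ∂μ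
      ≤ ∫ _, (1 : ℝ) ∂μ :=
        integral_mono ((hint.add (hf.integrable_snd hint)).div_const 2) (integrable_const 1)
          fun ω => Real.exp_sub_sq_div_two_average_le_one (Z ω)
    _ = 1 := by simp
end

section
/- Let (X_t)_{t∈ℕ} be a sequence of random variables such that, under Q, each X_t is conditionally symmetric around 0 given F_{t−1} (i.e., the conditional law of X_t equals that of −X_t). Then S_t := exp( Σ_{s≤t} X_s − (1/2) Σ_{s≤t} X_s² ) is a nonnegative supermartingale under Q. -/
/-!
Write `ψ x = exp (x - x ^ 2 / 2)`, so that `S t = ∏_{s<t} ψ (X (s + 1))`. The bound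
`cosh x ≤ exp (x ^ 2 / 2)` says exactly that `ψ x + ψ (-x) ≤ 2`; since `ψ` is bounded and
measurable, conditional symmetry gives `E[ψ (X (t + 1)) | ℱ t] = E[ψ (-X (t + 1)) | ℱ t]`,
hence both are at most `1`. Pulling the `ℱ t`-measurable factor `S t` out of
`E[S (t + 1) | ℱ t] = E[S t ψ (X (t + 1)) | ℱ t]` gives the supermartingale inequality.
-/

open MeasureTheory Filter
open scoped ENNReal

noncomputable def expSubHalfSq (x : ℝ) : ℝ := Real.exp (x - x ^ 2 / 2)

lemma expSubHalfSq_pos (x : ℝ) : 0 < expSubHalfSq x := Real.exp_pos _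

lemma continuous_expSubHalfSq : Continuous expSubHalfSq := by
  unfold expSubHalfSq; fun_prop

lemma abs_expSubHalfSq_le (x : ℝ) : |expSubHalfSq x| ≤ Real.exp (1 / 2) := by
  rw [abs_of_pos (expSubHalfSq_pos x)]
  exact Real.exp_le_exp.mpr (by nlinarith [sq_nonneg (x - 1)])

lemma expSubHalfSq_add_expSubHalfSq_neg_le_two (x : ℝ) :
    expSubHalfSq x + expSubHalfSq (-x) ≤ 2 := by
  have hcosh : Real.exp x + Real.exp (-x) ≤ 2 * Real.exp (x ^ 2 / 2) := by
    linarith [Real.cosh_le_exp_half_sq x, Real.cosh_eq x]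
  calc expSubHalfSq x + expSubHalfSq (-x)
      = (Real.exp x + Real.exp (-x)) * Real.exp (-(x ^ 2 / 2)) := by
        simp only [expSubHalfSq, add_mul, ← Real.exp_add]; ring_nf
    _ ≤ 2 * Real.exp (x ^ 2 / 2) * Real.exp (-(x ^ 2 / 2)) := by gcongr
    _ = 2 := by rw [mul_assoc, ← Real.exp_add, add_neg_cancel, Real.exp_zero, mul_one]

lemma exp_sum_sub_half_sum_sq {ι : Type*} (s : Finset ι) (x : ι → ℝ) :
    Real.exp ((∑ i ∈ s, x i) - 1 / 2 * ∑ i ∈ s, x i ^ 2) = ∏ i ∈ s, expSubHalfSq (x i) := by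
  rw [Finset.mul_sum, ← Finset.sum_sub_distrib, Real.exp_sum]
  exact Finset.prod_congr rfl fun i _ => by rw [expSubHalfSq]; ring_nf

section

variable {Ω : Type*} {m0 : MeasurableSpace Ω} {μ : Measure Ω}

lemma condExp_comp_le_of_condExp_comp_neg_eq [IsFiniteMeasure μ] {m : MeasurableSpace Ω}
    (hm : m ≤ m0) {g : ℝ → ℝ} {Y : Ω → ℝ} {C c : ℝ} (hg : Measurable g) (hgC : ∀ x, |g x| ≤ C)
    (hY : Measurable[m0] Y) (hsym : μ[fun ω => g (Y ω)|m] =ᵐ[μ] μ[fun ω => g (-Y ω)|m])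
    (hg_add : ∀ x, g x + g (-x) ≤ 2 * c) :
    μ[fun ω => g (Y ω)|m] ≤ᵐ[μ] fun _ => c := by
  have hint : ∀ {Z : Ω → ℝ}, Measurable[m0] Z → Integrable (fun ω => g (Z ω)) μ := @fun _ hZ =>
    .of_bound (hg.comp hZ).aestronglyMeasurable C (ae_of_all _ fun _ => hgC _)
  have hint_neg : Integrable (fun ω => g (-Y ω)) μ := hint hY.neg
  have hsum : μ[(fun ω => g (Y ω)) + fun ω => g (-Y ω)|m] ≤ᵐ[μ] fun _ => 2 * c := by
    rw [← condExp_const (μ := μ) hm (2 * c)]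
    exact condExp_mono ((hint hY).add hint_neg) (integrable_const _)
      (ae_of_all _ fun ω => hg_add (Y ω))
  filter_upwards [hsum, condExp_add (hint hY) hint_neg m, hsym] with ω h_sum h_add h_eq
  rw [h_add, Pi.add_apply, ← h_eq] at h_sum
  linarith

variable {ℱ : Filtration ℕ m0} {ξ : ℕ → Ω → ℝ}

lemma stronglyAdapted_prod_range (hξ : ∀ t, StronglyMeasurable[ℱ (t + 1)] (ξ t)) :
    StronglyAdapted ℱ fun t ω => ∏ s ∈ Finset.range t, ξ s ω := fun t =>
  Finset.stronglyMeasurable_fun_prod (Finset.range t) fun s hs =>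
    (hξ s).mono (ℱ.mono (Finset.mem_range.mp hs))

lemma supermartingale_prod_range [IsFiniteMeasure μ] {C : ℝ}
    (hξ : ∀ t, StronglyMeasurable[ℱ (t + 1)] (ξ t)) (hξ_nonneg : ∀ t ω, 0 ≤ ξ t ω)
    (hξC : ∀ t ω, ξ t ω ≤ C) (hξ_condExp : ∀ t, μ[ξ t|ℱ t] ≤ᵐ[μ] fun _ => 1) :
    Supermartingale (fun t ω => ∏ s ∈ Finset.range t, ξ s ω) ℱ μ := by
  set M : ℕ → Ω → ℝ := fun t ω => ∏ s ∈ Finset.range t, ξ s ω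
  have hadp : StronglyAdapted ℱ M := stronglyAdapted_prod_range hξ
  have hM_nonneg : ∀ t ω, 0 ≤ M t ω := fun t ω =>
    Finset.prod_nonneg fun s _ => hξ_nonneg s ω
  have hint : ∀ t, Integrable (M t) μ := fun t =>
    .of_bound ((hadp t).mono (ℱ.le t)).aestronglyMeasurable (C ^ t) <| ae_of_all _ fun ω => by
      rw [Real.norm_eq_abs, abs_of_nonneg (hM_nonneg t ω)]
      refine (Finset.prod_le_prod (s := Finset.range t) (fun s _ => hξ_nonneg s ω)
        fun s _ => hξC s ω).trans_eq ?_
      simp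
  have hξ_int : ∀ t, Integrable (ξ t) μ := fun t =>
    .of_bound ((hξ t).mono (ℱ.le _)).aestronglyMeasurable C <| ae_of_all _ fun ω => by
      rw [Real.norm_eq_abs, abs_of_nonneg (hξ_nonneg t ω)]; exact hξC t ω
  have hM_succ : ∀ t, M (t + 1) = M t * ξ t := fun t => by
    funext ω; exact Finset.prod_range_succ _ t
  refine supermartingale_nat hadp hint fun t => ?_
  have hpull : μ[M (t + 1)|ℱ t] =ᵐ[μ] M t * μ[ξ t|ℱ t] := by
    rw [hM_succ]
    exact condExp_mul_of_stronglyMeasurable_left (hadp t) (hM_succ t ▸ hint (t + 1)) (hξ_int t)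
  filter_upwards [hpull, hξ_condExp t] with ω h_pull h_le
  rw [h_pull, Pi.mul_apply]
  exact mul_le_of_le_one_right (hM_nonneg t ω) h_le

end

/-- Supermartingale under conditional symmetry: if each `X (t+1)` is conditionally
symmetric around `0` given `ℱ t` (the conditional law of `X (t+1)` equals that of
`−X (t+1)`, expressed via bounded measurable test functions), then
`S_t := exp(Σ_{s≤t} X_s − (1/2) Σ_{s≤t} X_s²)` is a nonnegative supermartingale. -/
theorem symmetric_exponential_supermartingale {Ω : Type*} {m0 : MeasurableSpace Ω}
    (μ : Measure Ω) [IsProbabilityMeasure μ] (ℱ : Filtration ℕ m0)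
    (X : ℕ → Ω → ℝ) (hX : ∀ t : ℕ, StronglyMeasurable[ℱ (t + 1)] (X (t + 1)))
    (hsym : ∀ (t : ℕ) (f : ℝ → ℝ), Measurable f → (∃ C, ∀ x, |f x| ≤ C) →
      μ[fun ω => f (X (t + 1) ω) | ℱ t] =ᵐ[μ] μ[fun ω => f (-X (t + 1) ω) | ℱ t]) :
    Supermartingale
      (fun t ω => Real.exp ((∑ s ∈ Finset.range t, X (s + 1) ω) -
        (1 / 2) * ∑ s ∈ Finset.range t, (X (s + 1) ω) ^ 2)) ℱ μ ∧
    ∀ t ω, 0 ≤ Real.exp ((∑ s ∈ Finset.range t, X (s + 1) ω) -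
        (1 / 2) * ∑ s ∈ Finset.range t, (X (s + 1) ω) ^ 2) := by
  refine ⟨?_, fun _ _ => (Real.exp_pos _).le⟩
  have hψ : Measurable expSubHalfSq := continuous_expSubHalfSq.measurable
  have hψX : ∀ t, StronglyMeasurable[ℱ (t + 1)] fun ω => expSubHalfSq (X (t + 1) ω) := fun t =>
    continuous_expSubHalfSq.comp_stronglyMeasurable (hX t)
  have hcond : ∀ t, μ[fun ω => expSubHalfSq (X (t + 1) ω)|ℱ t] ≤ᵐ[μ] fun _ => 1 := fun t =>
    condExp_comp_le_of_condExp_comp_neg_eq (ℱ.le t) hψ abs_expSubHalfSq_le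
      ((hX t).mono (ℱ.le _)).measurable (hsym t _ hψ ⟨_, abs_expSubHalfSq_le⟩)
      fun x => by linarith [expSubHalfSq_add_expSubHalfSq_neg_le_two x]
  simp only [exp_sum_sub_half_sum_sq]
  exact supermartingale_prod_range hψX (fun _ _ => (expSubHalfSq_pos _).le)
    (fun _ _ => (le_abs_self _).trans (abs_expSubHalfSq_le _)) hcond
end

section
/- If (𝔢_t)_{t∈ℕ₀} is a nonnegative adapted process satisfying E_Q[𝔢_τ] ≤ 1 for all stopping times τ (an anytime-valid e-value under Q), then the process 𝔭_t := min(1, inf_{s≤t} 1/𝔢_s) is an anytime-valid p-value for Q, i.e., Q(∃ t: 𝔭_t ≤ α) ≤ α for all α ∈ [0,1]. -/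
open MeasureTheory Filter
open scoped ENNReal

/-- Value of the process `e` at a possibly infinite stopping time `τ`, where
`e_∞ := limsup_{t→∞} e_t`. -/
noncomputable def stopVal {Ω : Type*} (e : ℕ → Ω → ℝ) (τ : Ω → ℕ∞) (ω : Ω) : ℝ :=
  if h : τ ω = ⊤ then Filter.limsup (fun t => e t ω) Filter.atTop
  else e ((τ ω).untop h) ω

/-- The running-minimum reciprocal `𝔭_t := min(1, inf_{s≤t} 1/𝔢_s)` (with `1/0 := ∞`,
computed in `ℝ≥0∞`). -/
noncomputable def pFromE {Ω : Type*} (e : ℕ → Ω → ℝ) (t : ℕ) (ω : Ω) : ℝ≥0∞ :=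
  min 1 (⨅ s ∈ Finset.Iic t, (ENNReal.ofReal (e s ω))⁻¹)

/-! For `α < 1`, the p-process drops to `α` exactly when the e-process reaches `1/α`, so the claim
is Ville's inequality. Let `τ` be the first time `𝔢` reaches `1/α` (`τ = ∞` if it never does);
on `{∃ t, 𝔢_t ≥ 1/α}` we have `𝔢_τ ≥ 1/α`, so Markov's inequality and `E[𝔢_τ] ≤ 1` give
`Q(∃ t, 𝔢_t ≥ 1/α) ≤ α`. -/

lemma stopVal_of_ne_top {Ω : Type*} (e : ℕ → Ω → ℝ) {τ : Ω → ℕ∞} {ω : Ω} (h : τ ω ≠ ⊤) :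
    stopVal e τ ω = stoppedValue e τ ω := by
  simp [stopVal, h, stoppedValue, WithTop.untopA_eq_untop h]

lemma pFromE_le_iff {Ω : Type*} (e : ℕ → Ω → ℝ) {t : ℕ} {ω : Ω} {α : ℝ≥0∞} (hα : α < 1) :
    pFromE e t ω ≤ α ↔ ∃ s ≤ t, α⁻¹ ≤ ENNReal.ofReal (e s ω) := by
  rw [pFromE, min_le_iff, or_iff_right (not_le.2 hα), ← Finset.inf_eq_iInf]
  simp [Finset.inf_le_iff (hα.trans ENNReal.one_lt_top), ENNReal.inv_le_iff_inv_le]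

lemma exists_pFromE_le_iff {Ω : Type*} (e : ℕ → Ω → ℝ) {ω : Ω} {α : ℝ≥0∞} (hα : α < 1) :
    (∃ t, pFromE e t ω ≤ α) ↔ ∃ t, α⁻¹ ≤ ENNReal.ofReal (e t ω) := by
  simp only [pFromE_le_iff e hα]
  exact ⟨fun ⟨_, s, _, hs⟩ ↦ ⟨s, hs⟩, fun ⟨s, hs⟩ ↦ ⟨s, s, le_rfl, hs⟩⟩

section Ville

variable {Ω : Type*} {m0 : MeasurableSpace Ω} {ℱ : Filtration ℕ m0} {e : ℕ → Ω → ℝ}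

lemma MeasureTheory.Adapted.measurableSet_exists_le_ofReal (hadp : Adapted ℱ e) (c : ℝ≥0∞) :
    MeasurableSet {ω | ∃ t, c ≤ ENNReal.ofReal (e t ω)} := by
  simp only [Set.ofPred_exists]
  exact .iUnion fun t ↦ ℱ.le t _ <|
    measurableSet_le measurable_const (ENNReal.measurable_ofReal.comp (hadp t))

theorem measure_exists_le_ofReal_le_inv (μ : Measure Ω) (hadp : Adapted ℱ e)
    (hsafe : ∀ τ : Ω → ℕ∞, IsStoppingTime ℱ τ → ∫⁻ ω, ENNReal.ofReal (stopVal e τ ω) ∂μ ≤ 1)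
    (c : ℝ≥0∞) : μ {ω | ∃ t, c ≤ ENNReal.ofReal (e t ω)} ≤ c⁻¹ := by
  set E := {ω | ∃ t, c ≤ ENNReal.ofReal (e t ω)}
  let τ := hittingAfter e (ENNReal.ofReal ⁻¹' Set.Ici c) 0
  have hτ : IsStoppingTime ℱ τ :=
    hadp.isStoppingTime_hittingAfter (ENNReal.measurable_ofReal measurableSet_Ici)
  have hτE : ∀ ω ∈ E, c ≤ ENNReal.ofReal (stopVal e τ ω) := by
    rintro ω ⟨t, ht : e t ω ∈ ENNReal.ofReal ⁻¹' Set.Ici c⟩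
    have hτt : τ ω ≤ t := hittingAfter_le_of_mem t.zero_le ht
    rw [stopVal_of_ne_top e (hτt.trans_lt (WithTop.coe_lt_top t)).ne]
    exact hittingAfter_mem_set ⟨t, t.zero_le, ht⟩
  rw [ENNReal.le_inv_iff_mul_le, mul_comm, ← setLIntegral_const]
  calc ∫⁻ _ in E, c ∂μ ≤ ∫⁻ ω in E, ENNReal.ofReal (stopVal e τ ω) ∂μ :=
        setLIntegral_mono' (hadp.measurableSet_exists_le_ofReal c) hτE
    _ ≤ ∫⁻ ω, ENNReal.ofReal (stopVal e τ ω) ∂μ := setLIntegral_le_lintegral _ _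
    _ ≤ 1 := hsafe τ hτ

end Ville

theorem e_value_to_p_value_general {Ω : Type*} {m0 : MeasurableSpace Ω}
    (μ : Measure Ω) [IsProbabilityMeasure μ] (ℱ : Filtration ℕ m0)
    (e : ℕ → Ω → ℝ) (hadp : Adapted ℱ e)
    (hsafe : ∀ τ : Ω → ℕ∞, (∀ t : ℕ, MeasurableSet[ℱ t] {ω | τ ω ≤ (t : ℕ∞)}) →
      ∫⁻ ω, ENNReal.ofReal (stopVal e τ ω) ∂μ ≤ 1)
    (α : ℝ≥0∞) :
    μ {ω | ∃ t : ℕ, pFromE e t ω ≤ α} ≤ α := by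
  rcases le_or_gt 1 α with hα | hα
  · exact prob_le_one.trans hα
  simp_rw [exists_pFromE_le_iff e hα]
  simpa only [inv_inv] using measure_exists_le_ofReal_le_inv μ hadp hsafe α⁻¹

/-- If `(𝔢_t)` is a nonnegative adapted process with `E[𝔢_τ] ≤ 1` for all (possibly
infinite) stopping times `τ` (an anytime-valid e-value), then
`𝔭_t := min(1, inf_{s≤t} 1/𝔢_s)` is an anytime-valid p-value:
`Q(∃ t, 𝔭_t ≤ α) ≤ α` for all `α ∈ [0,1]`. -/
theorem e_value_to_p_value {Ω : Type*} {m0 : MeasurableSpace Ω}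
    (μ : Measure Ω) [IsProbabilityMeasure μ] (ℱ : Filtration ℕ m0)
    (e : ℕ → Ω → ℝ) (hadp : Adapted ℱ e) (hpos : ∀ t ω, 0 ≤ e t ω)
    (hsafe : ∀ τ : Ω → ℕ∞, (∀ t : ℕ, MeasurableSet[ℱ t] {ω | τ ω ≤ (t : ℕ∞)}) →
      ∫⁻ ω, ENNReal.ofReal (stopVal e τ ω) ∂μ ≤ 1)
    (α : ℝ≥0∞) (hα : α ≤ 1) :
    μ {ω | ∃ t : ℕ, pFromE e t ω ≤ α} ≤ α :=
  e_value_to_p_value_general μ ℱ e hadp hsafe α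
end

section
/- If (𝔭_t)_{t∈ℕ₀} is an anytime-valid p-value for Q (so that inf_{t} 𝔭_t stochastically dominates a uniform [0,1] random variable under Q), then for any nonincreasing calibration function f : [0,1] → [0,∞) with ∫₀¹ f(u) du = 1, the process (f(𝔭_t)) is an anytime-valid e-value for Q: E_Q[f(𝔭_τ)] ≤ 1 for all stopping times τ. In particular, (1/(2√(𝔭_t))) is an anytime-valid e-value. -/
/-!
By the layer-cake formula, `E[g(V)] = ∫_0^∞ μ(g(V) > t) dt`. When `g` is nonincreasing on
`(0, 1]`, the superlevel set `{g > t}` meets `(0, 1]` in an interval of the form `(0, a)` or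
`(0, a]`, and since `V` is super-uniform, `μ(g(V) > t) ≤ μ(V ≤ a) ≤ a = |{g > t} ∩ [0, 1]|`.
Integrating over `t` gives `E[g(V)] ≤ ∫_0^1 g = 1`. Applied to `V = 𝔭_τ`, this gives the theorem,
and `u ↦ 1 / (2√u)` is such a `g`.
-/

open MeasureTheory Filter
open scoped ENNReal

/-- Value of the p-value process `p` at a possibly infinite stopping time `τ`, where
`𝔭_∞ := liminf_{t→∞} 𝔭_t`. -/
noncomputable def pStopVal {Ω : Type*} (p : ℕ → Ω → ℝ) (τ : Ω → ℕ∞) (ω : Ω) : ℝ :=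
  if h : τ ω = ⊤ then Filter.liminf (fun t => p t ω) Filter.atTop
  else p ((τ ω).untop h) ω

open Set

section PStopVal

variable {Ω : Type*} (p : ℕ → Ω → ℝ)

@[simp]
lemma pStopVal_const_top : pStopVal p (fun _ => ⊤) = fun ω => liminf (fun t => p t ω) atTop :=
  funext fun _ => dif_pos rfl

@[simp]
lemma pStopVal_const_coe (n : ℕ) : pStopVal p (fun _ => (n : ℕ∞)) = p n :=
  funext fun _ => dif_neg (ENat.natCast_ne_top n)

lemma pStopVal_mem_Icc {a b : ℝ} (hp : ∀ t ω, p t ω ∈ Icc a b) (τ : Ω → ℕ∞) (ω : Ω) :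
    pStopVal p τ ω ∈ Icc a b := by
  unfold pStopVal
  split_ifs
  · have hbdd_above : IsBoundedUnder (· ≤ ·) atTop (fun t => p t ω) :=
      isBoundedUnder_of ⟨b, fun t => (hp t ω).2⟩
    have hbdd_below : IsBoundedUnder (· ≥ ·) atTop (fun t => p t ω) :=
      isBoundedUnder_of ⟨a, fun t => (hp t ω).1⟩
    exact ⟨le_liminf_of_le hbdd_above.isCoboundedUnder_ge (.of_forall fun t => (hp t ω).1),
      liminf_le_of_frequently_le (.of_forall fun t => (hp t ω).2) hbdd_below⟩
  · exact hp _ ω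

variable {p} [MeasurableSpace Ω]

lemma measurable_pStopVal (hp : ∀ t, Measurable (p t)) {τ : Ω → ℕ∞} (hτ : Measurable τ) :
    Measurable (pStopVal p τ) := by
  have hconst : ∀ k : ℕ∞, Measurable (pStopVal p fun _ => k) := by
    intro k
    cases k with
    | top => simpa using Measurable.liminf hp
    | coe n => simpa using hp n
  exact (measurable_from_prod_countable_left
    (f := fun q : Ω × ℕ∞ => pStopVal p (fun _ => q.2) q.1) hconst).comp
    (measurable_id.prodMk hτ)

end PStopVal

lemma MeasureTheory.IsStoppingTime.measurable_enat {Ω : Type*} {m0 : MeasurableSpace Ω}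
    {ℱ : Filtration ℕ m0} {τ : Ω → ℕ∞} (hτ : IsStoppingTime ℱ τ) : Measurable τ :=
  measurable_to_countable' fun k =>
    (measurableSet_singleton (α := WithTop ℕ) k).preimage hτ.measurable'

lemma antitone_comp_projIcc {f : ℝ → ℝ} {a b : ℝ} (hab : a ≤ b) (hf : AntitoneOn f (Icc a b)) :
    Antitone fun x => f (projIcc a b hab x) := fun _ _ hxy =>
  hf (projIcc a b hab _).2 (projIcc a b hab _).2 (monotone_projIcc hab hxy)

def IsSuperUniform {Ω : Type*} [MeasurableSpace Ω] (μ : Measure Ω) (V : Ω → ℝ) : Prop :=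
  ∀ α ∈ Icc (0 : ℝ) 1, μ {ω | V ω ≤ α} ≤ ENNReal.ofReal α

namespace IsSuperUniform

variable {Ω : Type*} [MeasurableSpace Ω] {μ : Measure Ω} {V : Ω → ℝ}

lemma measure_preimage_le (hV : IsSuperUniform μ V) (hV1 : ∀ ω, V ω ≤ 1) {S : Set ℝ}
    (hS : ∀ u ∈ S ∩ Icc 0 1, ∀ v ∈ Ioc 0 u, v ∈ S) :
    μ (V ⁻¹' S) ≤ volume (S ∩ Icc 0 1) := by
  set a := sSup (S ∩ Ioc 0 1)
  have hbdd : BddAbove (S ∩ Ioc 0 1) := ⟨1, fun u hu => hu.2.2⟩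
  have ha0 : 0 ≤ a := Real.sSup_nonneg fun u hu => hu.2.1.le
  have ha1 : a ≤ 1 := Real.sSup_le (fun u hu => hu.2.2) zero_le_one
  have hpre : V ⁻¹' S ⊆ {ω | V ω ≤ a} := by
    intro ω hω
    rcases le_or_gt (V ω) 0 with h | h
    · exact h.trans ha0
    · exact le_csSup hbdd ⟨hω, h, hV1 ω⟩
  have hIoo : Ioo 0 a ⊆ S ∩ Icc 0 1 := by
    intro u hu
    have hne : (S ∩ Ioc 0 1).Nonempty := by
      by_contra h
      rw [not_nonempty_iff_eq_empty] at h
      simp only [a, h, Real.sSup_empty] at hu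
      exact (hu.1.trans hu.2).false
    obtain ⟨s, hs, hus⟩ := exists_lt_of_lt_csSup hne hu.2
    exact ⟨hS s ⟨hs.1, hs.2.1.le, hs.2.2⟩ u ⟨hu.1, hus.le⟩, hu.1.le, hus.le.trans hs.2.2⟩
  calc μ (V ⁻¹' S) ≤ μ {ω | V ω ≤ a} := measure_mono hpre
    _ ≤ ENNReal.ofReal a := hV a ⟨ha0, ha1⟩
    _ = volume (Ioo 0 a) := by rw [Real.volume_Ioo, sub_zero]
    _ ≤ volume (S ∩ Icc 0 1) := measure_mono hIoo

lemma lintegral_comp_le (hV : IsSuperUniform μ V) (hVm : AEMeasurable V μ)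
    (hV1 : ∀ ω, V ω ≤ 1) {g : ℝ → ℝ} (hgm : Measurable g) (hg : AntitoneOn g (Ioc 0 1))
    (hg0 : ∀ u, 0 ≤ g u) :
    ∫⁻ ω, ENNReal.ofReal (g (V ω)) ∂μ ≤ ∫⁻ u in Icc 0 1, ENNReal.ofReal (g u) := by
  have hlevel : ∀ t, μ {ω | t < g (V ω)} ≤ volume.restrict (Icc 0 1) {u | t < g u} := by
    intro t
    rw [Measure.restrict_apply' measurableSet_Icc]
    refine hV.measure_preimage_le hV1 fun u hu v hv => ?_
    have hu' : u ∈ Ioc 0 1 := ⟨hv.1.trans_le hv.2, hu.2.2⟩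
    exact hu.1.trans_le (hg ⟨hv.1, hv.2.trans hu'.2⟩ hu' hv.2)
  rw [lintegral_eq_lintegral_meas_lt μ (.of_forall fun ω => hg0 _) (hgm.comp_aemeasurable hVm),
    lintegral_eq_lintegral_meas_lt _ (.of_forall hg0) hgm.aemeasurable]
  exact lintegral_mono fun t => hlevel t

lemma lintegral_ofReal_comp_le_one (hV : IsSuperUniform μ V) (hVm : AEMeasurable V μ)
    (hV01 : ∀ ω, V ω ∈ Icc 0 1) {f : ℝ → ℝ} (hf : AntitoneOn f (Icc 0 1))
    (hf0 : ∀ u ∈ Icc 0 1, 0 ≤ f u) (hf1 : ∫ u in Icc 0 1, f u = 1) :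
    ∫⁻ ω, ENNReal.ofReal (f (V ω)) ∂μ ≤ 1 := by
  -- `f` need not be measurable; `f ∘ projIcc` is antitone, so measurable, and is `f` on `[0, 1]`
  set g : ℝ → ℝ := fun x => f (projIcc 0 1 zero_le_one x)
  have hgf : EqOn g f (Icc 0 1) := fun x hx => by simp only [g, projIcc_of_mem _ hx]
  have hg := antitone_comp_projIcc zero_le_one hf
  have hfi : IntegrableOn f (Icc 0 1) := .of_integral_ne_zero (by rw [hf1]; exact one_ne_zero)
  calc ∫⁻ ω, ENNReal.ofReal (f (V ω)) ∂μ
      = ∫⁻ ω, ENNReal.ofReal (g (V ω)) ∂μ := lintegral_congr fun ω => by rw [hgf (hV01 ω)]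
    _ ≤ ∫⁻ u in Icc 0 1, ENNReal.ofReal (g u) :=
        hV.lintegral_comp_le hVm (fun ω => (hV01 ω).2) hg.measurable (hg.antitoneOn _)
          fun x => hf0 _ (projIcc 0 1 _ x).2
    _ = ∫⁻ u in Icc 0 1, ENNReal.ofReal (f u) :=
        setLIntegral_congr_fun measurableSet_Icc fun u hu => by rw [hgf hu]
    _ = 1 := by
        rw [← ofReal_integral_eq_lintegral_ofReal hfi
          ((ae_restrict_iff' measurableSet_Icc).2 (.of_forall hf0)), hf1, ENNReal.ofReal_one]

end IsSuperUniform

lemma antitoneOn_one_div_two_mul_sqrt : AntitoneOn (fun u : ℝ => 1 / (2 * √u)) (Ioi 0) := by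
  intro u hu v _ huv
  have : 0 < u := hu
  dsimp only
  gcongr

lemma lintegral_one_div_two_mul_sqrt :
    ∫⁻ u in Icc (0 : ℝ) 1, ENNReal.ofReal (1 / (2 * √u)) = 1 := by
  have heq : EqOn (fun u => 1 / (2 * √u)) (fun u => u ^ (-(1 / 2) : ℝ) / 2) (Icc 0 1) := by
    intro u hu
    dsimp only
    rcases hu.1.eq_or_lt with h | h
    · simp [← h]
    · rw [Real.rpow_neg h.le, ← Real.sqrt_eq_rpow]
      field_simp
  have hint : IntegrableOn (fun u : ℝ => u ^ (-(1 / 2) : ℝ) / 2) (Icc 0 1) := by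
    rw [integrableOn_Icc_iff_integrableOn_Ioc,
      ← intervalIntegrable_iff_integrableOn_Ioc_of_le zero_le_one]
    exact (intervalIntegral.intervalIntegrable_rpow' (by norm_num)).div_const 2
  have hval : ∫ u in Icc (0 : ℝ) 1, u ^ (-(1 / 2) : ℝ) / 2 = 1 := by
    rw [integral_Icc_eq_integral_Ioc, ← intervalIntegral.integral_of_le zero_le_one,
      intervalIntegral.integral_div, integral_rpow (Or.inl (by norm_num)), Real.one_rpow,
      Real.zero_rpow (by norm_num)]
    norm_num
  rw [setLIntegral_congr_fun measurableSet_Icc fun u hu => congrArg ENNReal.ofReal (heq hu),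
    ← ofReal_integral_eq_lintegral_ofReal hint
      ((ae_restrict_iff' measurableSet_Icc).2
        (.of_forall fun u hu => div_nonneg (Real.rpow_nonneg hu.1 _) zero_le_two)),
    hval, ENNReal.ofReal_one]

theorem p_value_calibration_to_e_value_general {Ω : Type*} {m0 : MeasurableSpace Ω}
    (μ : Measure Ω) (ℱ : Filtration ℕ m0)
    (p : ℕ → Ω → ℝ) (hadp : Adapted ℱ p) (hp01 : ∀ t ω, p t ω ∈ Set.Icc (0:ℝ) 1)
    (hvalid : ∀ τ : Ω → ℕ∞, (∀ t : ℕ, MeasurableSet[ℱ t] {ω | τ ω ≤ (t : ℕ∞)}) →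
      ∀ α ∈ Set.Icc (0:ℝ) 1, μ {ω | pStopVal p τ ω ≤ α} ≤ ENNReal.ofReal α) :
    (∀ f : ℝ → ℝ, AntitoneOn f (Set.Icc (0:ℝ) 1) → (∀ u ∈ Set.Icc (0:ℝ) 1, 0 ≤ f u) →
      (∫ u in Set.Icc (0:ℝ) 1, f u) = 1 →
      ∀ τ : Ω → ℕ∞, (∀ t : ℕ, MeasurableSet[ℱ t] {ω | τ ω ≤ (t : ℕ∞)}) →
        ∫⁻ ω, ENNReal.ofReal (f (pStopVal p τ ω)) ∂μ ≤ 1) ∧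
    (∀ τ : Ω → ℕ∞, (∀ t : ℕ, MeasurableSet[ℱ t] {ω | τ ω ≤ (t : ℕ∞)}) →
      ∫⁻ ω, ENNReal.ofReal (1 / (2 * Real.sqrt (pStopVal p τ ω))) ∂μ ≤ 1) := by
  have hmeas (τ : Ω → ℕ∞) (hτ : IsStoppingTime ℱ τ) : AEMeasurable (pStopVal p τ) μ :=
    (measurable_pStopVal (fun t => (hadp t).mono (ℱ.le t) le_rfl)
      hτ.measurable_enat).aemeasurable
  have hmem := pStopVal_mem_Icc p hp01
  refine ⟨fun f hf hf0 hf1 τ hτ => ?_, fun τ hτ => ?_⟩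
  · exact IsSuperUniform.lintegral_ofReal_comp_le_one (hvalid τ hτ) (hmeas τ hτ) (hmem τ)
      hf hf0 hf1
  · calc ∫⁻ ω, ENNReal.ofReal (1 / (2 * √(pStopVal p τ ω))) ∂μ
        ≤ ∫⁻ u in Icc 0 1, ENNReal.ofReal (1 / (2 * √u)) :=
          IsSuperUniform.lintegral_comp_le (hvalid τ hτ) (hmeas τ hτ) (fun ω => (hmem τ ω).2)
            (by fun_prop) (antitoneOn_one_div_two_mul_sqrt.mono Ioc_subset_Ioi_self)
            fun u => by positivity
      _ = 1 := lintegral_one_div_two_mul_sqrt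

/-- Calibration of anytime-valid p-values into anytime-valid e-values: if
`Q(𝔭_τ ≤ α) ≤ α` for all stopping times `τ` and `α ∈ [0,1]`, and `f : [0,1] → [0,∞)` is
nonincreasing with `∫₀¹ f(u) du = 1`, then `E_Q[f(𝔭_τ)] ≤ 1` for all stopping times `τ`.
In particular `1/(2√𝔭_τ)` has expectation at most one at every stopping time. -/
theorem p_value_calibration_to_e_value {Ω : Type*} {m0 : MeasurableSpace Ω}
    (μ : Measure Ω) [IsProbabilityMeasure μ] (ℱ : Filtration ℕ m0)
    (p : ℕ → Ω → ℝ) (hadp : Adapted ℱ p) (hp01 : ∀ t ω, p t ω ∈ Set.Icc (0:ℝ) 1)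
    (hvalid : ∀ τ : Ω → ℕ∞, (∀ t : ℕ, MeasurableSet[ℱ t] {ω | τ ω ≤ (t : ℕ∞)}) →
      ∀ α ∈ Set.Icc (0:ℝ) 1, μ {ω | pStopVal p τ ω ≤ α} ≤ ENNReal.ofReal α) :
    (∀ f : ℝ → ℝ, AntitoneOn f (Set.Icc (0:ℝ) 1) → (∀ u ∈ Set.Icc (0:ℝ) 1, 0 ≤ f u) →
      (∫ u in Set.Icc (0:ℝ) 1, f u) = 1 →
      ∀ τ : Ω → ℕ∞, (∀ t : ℕ, MeasurableSet[ℱ t] {ω | τ ω ≤ (t : ℕ∞)}) →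
        ∫⁻ ω, ENNReal.ofReal (f (pStopVal p τ ω)) ∂μ ≤ 1) ∧
    (∀ τ : Ω → ℕ∞, (∀ t : ℕ, MeasurableSet[ℱ t] {ω | τ ω ≤ (t : ℕ∞)}) →
      ∫⁻ ω, ENNReal.ofReal (1 / (2 * Real.sqrt (pStopVal p τ ω))) ∂μ ≤ 1) :=
  p_value_calibration_to_e_value_general μ ℱ p hadp hp01 hvalid
end

section
/- Characterization of nonnegative martingales under conditional symmetry (sufficiency): let 𝒮 be the family of probability measures under which each observation X_t is, conditionally on F_{t−1}, symmetric around 0. Suppose (f_t) is a sequence of nonnegative predictable functions with f_t(x) + f_t(−x) = 2 for all x ∈ ℝ and t. Then M_t := Π_{s≤t} f_s(X_s) is a nonnegative martingale under every Q ∈ 𝒮 (with M_0 = 1). -/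
/-!
Conditional symmetry of `X_{t+1}` given `ℱ_t`, tested on indicators, says that `(ω, X_{t+1} ω)`
and `(ω, -X_{t+1} ω)` have the same law on `(Ω, ℱ_t) × ℝ`. Hence for a predictable `f` the
factors `f(X_{t+1})` and `f(-X_{t+1})` have the same conditional expectation given `ℱ_t`, and since
they add up to `2`, both conditional expectations equal `1`. The product of bounded factors with
conditional mean `1` is a martingale.
-/

open MeasureTheory Filter

section JointLaw

variable {Ω β : Type*} {m m0 : MeasurableSpace Ω} {mβ : MeasurableSpace β} {μ : Measure Ω}

theorem MeasureTheory.StronglyMeasurable.comp_prodMk_of_le {m' : MeasurableSpace Ω} {E : Type*}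
    [TopologicalSpace E] {F : Ω → β → E}
    (hF : StronglyMeasurable[m.prod mβ] (fun q : Ω × β => F q.1 q.2)) (hm : m ≤ m')
    {Y : Ω → β} (hY : Measurable[m'] Y) :
    StronglyMeasurable[m'] (fun ω => F ω (Y ω)) :=
  hF.comp_measurable ((measurable_id'' hm).prodMk hY)

theorem measure_inter_preimage_eq_of_condExp_indicator_eq [IsFiniteMeasure μ] (hm : m ≤ m0)
    {Y Z : Ω → β} (hY : Measurable Y) (hZ : Measurable Z)
    (h : ∀ B, MeasurableSet B →
      μ[fun ω => B.indicator (1 : β → ℝ) (Y ω) | m] =ᵐ[μ]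
        μ[fun ω => B.indicator (1 : β → ℝ) (Z ω) | m])
    {A : Set Ω} (hA : MeasurableSet[m] A) {B : Set β} (hB : MeasurableSet B) :
    μ (A ∩ Y ⁻¹' B) = μ (A ∩ Z ⁻¹' B) := by
  have h_real (W : Ω → β) (hW : Measurable W) :
      ∫ ω in A, B.indicator (1 : β → ℝ) (W ω) ∂μ = μ.real (A ∩ W ⁻¹' B) := by
    simp only [← Set.indicator_comp_right, Function.comp_def, Pi.one_apply]
    rw [integral_indicator_const _ (hW hB), measureReal_restrict_apply (hW hB), Set.inter_comm,
      smul_eq_mul, mul_one]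
  have hint (W : Ω → β) (hW : Measurable W) :
      Integrable (fun ω => B.indicator (1 : β → ℝ) (W ω)) μ :=
    (integrable_const (1 : ℝ)).indicator hB |>.comp_measurable hW
  have h_setIntegral : ∫ ω in A, B.indicator (1 : β → ℝ) (Y ω) ∂μ =
      ∫ ω in A, B.indicator (1 : β → ℝ) (Z ω) ∂μ := by
    rw [← setIntegral_condExp hm (hint Y hY) hA, ← setIntegral_condExp hm (hint Z hZ) hA]
    exact setIntegral_congr_ae (hm A hA) ((h B hB).mono fun ω hω _ => hω)
  rw [h_real Y hY, h_real Z hZ] at h_setIntegral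
  exact (measureReal_eq_measureReal_iff (measure_ne_top μ _) (measure_ne_top μ _)).mp h_setIntegral

theorem integral_comp_prodMk_eq_of_measure_inter_preimage_eq [IsFiniteMeasure μ] (hm : m ≤ m0)
    {Y Z : Ω → β} (hY : Measurable Y) (hZ : Measurable Z)
    (h : ∀ A, MeasurableSet[m] A → ∀ B, MeasurableSet B → μ (A ∩ Y ⁻¹' B) = μ (A ∩ Z ⁻¹' B))
    {E : Type*} [NormedAddCommGroup E] [NormedSpace ℝ E] {F : Ω × β → E}
    (hF : StronglyMeasurable[m.prod mβ] F) :
    ∫ ω, F (ω, Y ω) ∂μ = ∫ ω, F (ω, Z ω) ∂μ := by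
  let : MeasurableSpace (Ω × β) := m.prod mβ
  have hY' : Measurable fun ω => (ω, Y ω) := (measurable_id'' hm).prodMk hY
  have hZ' : Measurable fun ω => (ω, Z ω) := (measurable_id'' hm).prodMk hZ
  have h_law : μ.map (fun ω => (ω, Y ω)) = μ.map (fun ω => (ω, Z ω)) := by
    refine Measure.ext_prod fun {A B} hA hB => ?_
    rw [Measure.map_apply hY' (hA.prod hB), Measure.map_apply hZ' (hA.prod hB)]
    exact h A hA B hB
  rw [← integral_map hY'.aemeasurable hF.aestronglyMeasurable, h_law,
    integral_map hZ'.aemeasurable hF.aestronglyMeasurable]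

theorem condExp_comp_prodMk_eq_of_measure_inter_preimage_eq [IsFiniteMeasure μ] (hm : m ≤ m0)
    {Y Z : Ω → β} (hY : Measurable Y) (hZ : Measurable Z)
    (h : ∀ A, MeasurableSet[m] A → ∀ B, MeasurableSet B → μ (A ∩ Y ⁻¹' B) = μ (A ∩ Z ⁻¹' B))
    {E : Type*} [NormedAddCommGroup E] [NormedSpace ℝ E] [CompleteSpace E] {F : Ω × β → E}
    (hF : StronglyMeasurable[m.prod mβ] F) (hFY : Integrable (fun ω => F (ω, Y ω)) μ)
    (hFZ : Integrable (fun ω => F (ω, Z ω)) μ) :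
    μ[fun ω => F (ω, Y ω) | m] =ᵐ[μ] μ[fun ω => F (ω, Z ω) | m] := by
  refine ae_eq_condExp_of_forall_setIntegral_eq hm hFZ
    (fun s _ _ => integrable_condExp.integrableOn) (fun s hs _ => ?_)
    stronglyMeasurable_condExp.aestronglyMeasurable
  rw [setIntegral_condExp hm hFY hs]
  refine integral_comp_prodMk_eq_of_measure_inter_preimage_eq hm hY hZ
    (fun A hA B hB => ?_) hF
  rw [Measure.restrict_apply ((hm A hA).inter (hY hB)),
    Measure.restrict_apply ((hm A hA).inter (hZ hB))]
  simpa only [Set.inter_right_comm A s] using h (A ∩ s) (hA.inter hs) B hB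

end JointLaw

section ProductMartingale

variable {Ω : Type*} {m m0 : MeasurableSpace Ω} {μ : Measure Ω} [IsFiniteMeasure μ]

theorem condExp_comp_eq_one_of_add_comp_neg_eq_two (hm : m ≤ m0) {Y : Ω → ℝ} (hY : Measurable Y)
    (h : ∀ A, MeasurableSet[m] A → ∀ B, MeasurableSet B →
      μ (A ∩ Y ⁻¹' B) = μ (A ∩ (fun ω => -Y ω) ⁻¹' B))
    {f : Ω → ℝ → ℝ} (hf : StronglyMeasurable[m.prod (borel ℝ)] (fun q : Ω × ℝ => f q.1 q.2))
    (hf_nonneg : ∀ ω x, 0 ≤ f ω x) (hf_sym : ∀ ω x, f ω x + f ω (-x) = 2) :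
    μ[fun ω => f ω (Y ω) | m] =ᵐ[μ] 1 := by
  have hint {W : Ω → ℝ} (hW : Measurable W) : Integrable (fun ω => f ω (W ω)) μ := by
    refine .of_bound (hf.comp_prodMk_of_le hm hW).aestronglyMeasurable 2 (ae_of_all _ fun ω => ?_)
    rw [Real.norm_of_nonneg (hf_nonneg _ _)]
    linarith [hf_sym ω (W ω), hf_nonneg ω (-W ω)]
  have h_eq : μ[fun ω => f ω (Y ω) | m] =ᵐ[μ] μ[fun ω => f ω (-Y ω) | m] :=
    condExp_comp_prodMk_eq_of_measure_inter_preimage_eq hm hY hY.neg h hf (hint hY) (hint hY.neg)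
  have h_sum : μ[fun ω => f ω (Y ω) | m] + μ[fun ω => f ω (-Y ω) | m] =ᵐ[μ] fun _ => 2 := by
    refine (condExp_add (hint hY) (hint hY.neg) m).symm.trans (EventuallyEq.of_eq ?_)
    rw [← condExp_const (μ := μ) hm (2 : ℝ)]
    exact congrArg _ (funext fun ω => hf_sym ω (Y ω))
  filter_upwards [h_eq, h_sum] with ω h_eq h_sum
  simp only [Pi.add_apply] at h_sum
  simp only [Pi.one_apply]
  linarith

theorem martingale_prod_of_condExp_eq_one {ℱ : Filtration ℕ m0} {Y : ℕ → Ω → ℝ} {C : ℝ}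
    (hY : ∀ t, StronglyMeasurable[ℱ (t + 1)] (Y t)) (hY_bdd : ∀ t ω, |Y t ω| ≤ C)
    (hY_cond : ∀ t, μ[Y t | ℱ t] =ᵐ[μ] 1) :
    Martingale (fun t ω => ∏ s ∈ Finset.range t, Y s ω) ℱ μ := by
  have h_adapted : StronglyAdapted ℱ (fun t ω => ∏ s ∈ Finset.range t, Y s ω) := fun t =>
    Finset.stronglyMeasurable_fun_prod _ fun s hs =>
      (hY s).mono (ℱ.mono (Finset.mem_range.mp hs))
  have h_int (t : ℕ) : Integrable (fun ω => ∏ s ∈ Finset.range t, Y s ω) μ := by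
    refine .of_bound ((h_adapted t).mono (ℱ.le t)).aestronglyMeasurable (C ^ t)
      (ae_of_all _ fun ω => ?_)
    rw [Real.norm_eq_abs, Finset.abs_prod]
    calc ∏ s ∈ Finset.range t, |Y s ω| ≤ ∏ _s ∈ Finset.range t, C :=
          Finset.prod_le_prod (fun s _ => abs_nonneg (Y s ω)) fun s _ => hY_bdd s ω
      _ = C ^ t := by rw [Finset.prod_const, Finset.card_range]
  refine martingale_nat h_adapted h_int fun t => ?_
  have h_succ : (fun ω => ∏ s ∈ Finset.range (t + 1), Y s ω) =
      (fun ω => ∏ s ∈ Finset.range t, Y s ω) * Y t := by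
    funext ω
    exact Finset.prod_range_succ _ _
  rw [h_succ]
  have h_int_factor : Integrable (Y t) μ :=
    .of_bound ((hY t).mono (ℱ.le _)).aestronglyMeasurable C (ae_of_all _ (hY_bdd t))
  refine EventuallyEq.trans ?_ (condExp_mul_of_stronglyMeasurable_left (h_adapted t)
    (h_succ ▸ h_int (t + 1)) h_int_factor).symm
  filter_upwards [hY_cond t] with ω hω
  simp [hω]

end ProductMartingale

/-- Sufficiency part of the characterization of nonnegative martingales under
conditional symmetry: if `(f_t)` is a sequence of nonnegative predictable functions
(jointly measurable in the past and the argument) satisfying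
`f_t(ω, x) + f_t(ω, −x) = 2`, then `M_t := Π_{s≤t} f_s(ω, X_s)` (with `M_0 = 1`) is a
nonnegative martingale under every law `μ` making each `X_t` conditionally symmetric
around `0` given `ℱ_{t-1}`. -/
theorem product_martingale_of_conditional_symmetry {Ω : Type*} {m0 : MeasurableSpace Ω}
    (ℱ : Filtration ℕ m0) (X : ℕ → Ω → ℝ)
    (hX : ∀ t : ℕ, StronglyMeasurable[ℱ (t + 1)] (X (t + 1)))
    (f : ℕ → Ω → ℝ → ℝ)
    (hfmeas : ∀ t : ℕ,
      StronglyMeasurable[(ℱ t).prod (borel ℝ)] (fun q : Ω × ℝ => f (t + 1) q.1 q.2))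
    (hfpos : ∀ t ω x, 0 ≤ f t ω x)
    (hfsym : ∀ t ω x, f t ω x + f t ω (-x) = 2)
    (μ : Measure Ω) [IsProbabilityMeasure μ]
    (hsym : ∀ (t : ℕ) (g : ℝ → ℝ), Measurable g → (∃ C, ∀ x, |g x| ≤ C) →
      μ[fun ω => g (X (t + 1) ω) | ℱ t] =ᵐ[μ] μ[fun ω => g (-X (t + 1) ω) | ℱ t]) :
    Martingale (fun t ω => ∏ s ∈ Finset.range t, f (s + 1) ω (X (s + 1) ω)) ℱ μ ∧
    ∀ t ω, 0 ≤ ∏ s ∈ Finset.range t, f (s + 1) ω (X (s + 1) ω) := by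
  have hX_meas (t : ℕ) : Measurable (X (t + 1)) := (hX t).measurable.mono (ℱ.le _) le_rfl
  have h_law (t : ℕ) : ∀ A, MeasurableSet[ℱ t] A → ∀ B, MeasurableSet B →
      μ (A ∩ X (t + 1) ⁻¹' B) = μ (A ∩ (fun ω => -X (t + 1) ω) ⁻¹' B) :=
    fun A hA B hB => measure_inter_preimage_eq_of_condExp_indicator_eq (ℱ.le t) (hX_meas t)
      (hX_meas t).neg (fun B hB => hsym t _ (measurable_const.indicator hB)
        ⟨1, fun x => by by_cases hx : x ∈ B <;> simp [hx]⟩) hA hB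
  have hf_bdd (t : ℕ) (ω : Ω) (x : ℝ) : |f t ω x| ≤ 2 := by
    rw [abs_of_nonneg (hfpos t ω x)]
    linarith [hfsym t ω x, hfpos t ω (-x)]
  refine ⟨martingale_prod_of_condExp_eq_one
    (fun t => (hfmeas t).comp_prodMk_of_le (ℱ.mono t.le_succ) (hX t).measurable)
    (fun t ω => hf_bdd _ _ _)
    (fun t => condExp_comp_eq_one_of_add_comp_neg_eq_two (ℱ.le t) (hX_meas t) (h_law t)
      (hfmeas t) (hfpos _) (hfsym _)),
    fun t ω => Finset.prod_nonneg fun s _ => hfpos _ _ _⟩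
end

section
/- If (M_t)_{t∈ℕ₀} is a nonnegative martingale with M_0 = 1 almost surely and the increments are not trivial (i.e., P(M_1/M_0 ≠ 1) > 0, with 0/0 := 1), then sup_{t∈ℕ₀} M_t has an atom at 1: P(sup_{t∈ℕ₀} M_t = 1) > 0. -/
/-!
Let `A = {M₁ < 1}`. Since `E M₁ = E M₀ = 1` and `M₁` is not a.s. `1`, `P(A) > 0`. The process
`1_A M_{t+1}` is a nonnegative martingale for the shifted filtration, so Ville's inequality
(Doob's maximal inequality letting the horizon go to infinity) gives
`P(A ∩ {∃ t, M_{t+1} ≥ 1}) ≤ E[1_A M₁] < P(A)`. On the rest of `A` we have `M₀ = 1` and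
`M_t < 1` for all `t ≥ 1`, hence `sup_t M_t = 1`.
-/

open MeasureTheory Filter
open scoped ENNReal NNReal

theorem ENNReal.iSup_ofReal_eq_of_le {ι : Type*} {x : ι → ℝ} {i : ι} (hle : ∀ j, x j ≤ x i) :
    ⨆ j, ENNReal.ofReal (x j) = ENNReal.ofReal (x i) :=
  le_antisymm (iSup_le fun j => ENNReal.ofReal_le_ofReal (hle j)) (le_iSup_of_le i le_rfl)

namespace MeasureTheory

variable {Ω : Type*} {m0 : MeasurableSpace Ω} {μ : Measure Ω}

def Filtration.shift (ℱ : Filtration ℕ m0) (n : ℕ) : Filtration ℕ m0 where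
  seq k := ℱ (k + n)
  mono' _ _ hij := ℱ.mono (by omega)
  le' k := ℱ.le (k + n)

theorem Martingale.shift {ℱ : Filtration ℕ m0} {f : ℕ → Ω → ℝ} (hf : Martingale f ℱ μ) (n : ℕ) :
    Martingale (fun k => f (k + n)) (ℱ.shift n) μ :=
  ⟨fun k => hf.stronglyAdapted (k + n), fun _ _ hij => hf.condExp_ae_eq (by omega)⟩

theorem Martingale.indicator {ι : Type*} [Preorder ι] [OrderBot ι] {ℱ : Filtration ι m0}
    {f : ι → Ω → ℝ} (hf : Martingale f ℱ μ) {A : Set Ω} (hA : MeasurableSet[ℱ ⊥] A) :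
    Martingale (fun i => A.indicator (f i)) ℱ μ := by
  have hA' (i : ι) : MeasurableSet[ℱ i] A := ℱ.mono bot_le A hA
  refine ⟨fun i => (hf.stronglyAdapted i).indicator (hA' i), fun i j hij => ?_⟩
  filter_upwards [condExp_indicator (hf.integrable j) (hA' i), hf.condExp_ae_eq hij]
    with ω hind hcond
  rw [hind]
  by_cases hω : ω ∈ A <;> simp [hω, hcond]

theorem Martingale.integral_eq {ι : Type*} [Preorder ι] [IsFiniteMeasure μ] {ℱ : Filtration ι m0}
    {f : ι → Ω → ℝ} (hf : Martingale f ℱ μ) {i j : ι} (hij : i ≤ j) :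
    ∫ ω, f j ω ∂μ = ∫ ω, f i ω ∂μ := by
  simpa only [setIntegral_univ] using (hf.setIntegral_eq hij MeasurableSet.univ).symm

theorem Martingale.mul_measure_exists_le_le [IsFiniteMeasure μ] {ℱ : Filtration ℕ m0}
    {f : ℕ → Ω → ℝ} (hf : Martingale f ℱ μ) (hnonneg : 0 ≤ f) (ε : ℝ≥0) :
    ε * μ {ω | ∃ k, (ε : ℝ) ≤ f k ω} ≤ ENNReal.ofReal (∫ ω, f 0 ω ∂μ) := by
  set S : ℕ → Set Ω := fun n =>
    {ω | (ε : ℝ) ≤ (Finset.range (n + 1)).sup' Finset.nonempty_range_add_one fun k => f k ω}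
  have hS : {ω | ∃ k, (ε : ℝ) ≤ f k ω} = ⋃ n, S n := by
    ext ω
    simp only [S, Set.mem_ofPred_eq, Set.mem_iUnion, Finset.le_sup'_iff, Finset.mem_range]
    exact ⟨fun ⟨k, hk⟩ => ⟨k, k, k.lt_succ_self, hk⟩, fun ⟨_, k, _, hk⟩ => ⟨k, hk⟩⟩
  have hS_mono : Monotone S := fun m n hmn ω hω => by
    simp only [S, Set.mem_ofPred_eq, Finset.le_sup'_iff, Finset.mem_range] at hω ⊢
    obtain ⟨k, hk, hεk⟩ := hω
    exact ⟨k, by omega, hεk⟩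
  rw [hS, hS_mono.measure_iUnion, ENNReal.mul_iSup]
  refine iSup_le fun n => (maximal_ineq hf.submartingale hnonneg n).trans ?_
  refine ENNReal.ofReal_le_ofReal ((setIntegral_le_integral (hf.integrable n)
    (Eventually.of_forall (hnonneg n))).trans (hf.integral_eq n.zero_le).le)

theorem Martingale.mul_measure_inter_exists_le_le [IsFiniteMeasure μ] {ℱ : Filtration ℕ m0}
    {f : ℕ → Ω → ℝ} (hf : Martingale f ℱ μ) (hnonneg : 0 ≤ f) {A : Set Ω}
    (hA : MeasurableSet[ℱ 0] A) (ε : ℝ≥0) :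
    ε * μ (A ∩ {ω | ∃ k, (ε : ℝ) ≤ f k ω}) ≤ ENNReal.ofReal (∫ ω in A, f 0 ω ∂μ) := by
  have hsub : A ∩ {ω | ∃ k, (ε : ℝ) ≤ f k ω} ⊆ {ω | ∃ k, (ε : ℝ) ≤ A.indicator (f k) ω} :=
    fun ω ⟨hωA, k, hk⟩ => ⟨k, by rwa [Set.indicator_of_mem hωA]⟩
  rw [← integral_indicator (ℱ.le 0 A hA)]
  calc ε * μ (A ∩ {ω | ∃ k, (ε : ℝ) ≤ f k ω})
      ≤ ε * μ {ω | ∃ k, (ε : ℝ) ≤ A.indicator (f k) ω} := by gcongr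
    _ ≤ _ := (hf.indicator hA).mul_measure_exists_le_le
        (fun k ω => Set.indicator_nonneg (fun ω _ => hnonneg k ω) ω) ε

theorem setIntegral_lt_mul_measureReal {f : Ω → ℝ} {s : Set Ω} {c : ℝ} (hs : MeasurableSet s)
    (hμs : μ s ≠ 0) (hμs_fin : μ s ≠ ∞) (hf : IntegrableOn f s μ) (hlt : ∀ x ∈ s, f x < c) :
    ∫ x in s, f x ∂μ < c * μ.real s := by
  have hc : IntegrableOn (fun _ => c) s μ := integrableOn_const hμs_fin
  have hpos : 0 < ∫ x in s, (c - f x) ∂μ := by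
    rw [setIntegral_pos_iff_support_of_nonneg_ae
      ((ae_restrict_iff' hs).2 (Eventually.of_forall fun x hx => (sub_pos.2 (hlt x hx)).le))
      (hc.sub hf)]
    have hsupp : Function.support (fun x => c - f x) ∩ s = s :=
      Set.inter_eq_right.2 fun x hx => (sub_pos.2 (hlt x hx)).ne'
    rwa [hsupp, pos_iff_ne_zero]
  rw [integral_sub hc hf, setIntegral_const, smul_eq_mul] at hpos
  linarith

theorem measure_lt_pos_of_integral_eq [IsProbabilityMeasure μ] {X : Ω → ℝ} (hX : Integrable X μ)
    {c : ℝ} (hmean : ∫ ω, X ω ∂μ = c) (hne : 0 < μ {ω | X ω ≠ c}) : 0 < μ {ω | X ω < c} := by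
  refine pos_iff_ne_zero.2 fun hnull => hne.ne' ?_
  have hle : (fun _ => c) ≤ᵐ[μ] X := by
    filter_upwards [measure_eq_zero_iff_ae_notMem.1 hnull] with ω hω using not_lt.1 hω
  have heq : (fun _ => c) =ᵐ[μ] X :=
    (integral_eq_iff_of_ae_le (integrable_const c) hX hle).1 (by simp [hmean])
  exact measure_eq_zero_iff_ae_notMem.2 (heq.mono fun ω hω => not_not.2 hω.symm)

end MeasureTheory

/-- If `(M_t)` is a nonnegative martingale with `M_0 = 1` a.s. and nontrivial first
increment (`P(M_1/M_0 ≠ 1) > 0`, with `0/0 := 1`), then `sup_t M_t` has an atom at `1`: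
`P(sup_t M_t = 1) > 0`. -/
theorem sup_of_martingale_has_atom_at_one {Ω : Type*} {m0 : MeasurableSpace Ω}
    (μ : Measure Ω) [IsProbabilityMeasure μ] (ℱ : Filtration ℕ m0)
    (M : ℕ → Ω → ℝ) (hM : Martingale M ℱ μ) (hpos : ∀ t ω, 0 ≤ M t ω)
    (h0 : ∀ᵐ ω ∂μ, M 0 ω = 1)
    (hnontrivial : 0 < μ {ω |
      (if M 0 ω = 0 ∧ M 1 ω = 0 then (1:ℝ) else M 1 ω / M 0 ω) ≠ 1}) :
    0 < μ {ω | (⨆ t : ℕ, ENNReal.ofReal (M t ω)) = 1} := by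
  have hne : 0 < μ {ω | M 1 ω ≠ 1} := by
    refine hnontrivial.trans_le (measure_mono_ae ?_)
    filter_upwards [h0] with ω hω hratio h1
    exact hratio (by simp [hω, h1])
  have hmean : ∫ ω, M 1 ω ∂μ = 1 := by
    rw [hM.integral_eq zero_le_one, integral_congr_ae h0]
    simp
  set A := {ω | M 1 ω < 1}
  set B := {ω | ∃ k, (1 : ℝ) ≤ M (k + 1) ω}
  have hA : MeasurableSet[ℱ 1] A :=
    measurableSet_lt (hM.stronglyAdapted 1).measurable measurable_const
  have hμA : 0 < μ A := measure_lt_pos_of_integral_eq (hM.integrable 1) hmean hne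
  have hAB : μ (A ∩ B) < μ A := calc
    μ (A ∩ B) ≤ ENNReal.ofReal (∫ ω in A, M 1 ω ∂μ) := by
      simpa using (hM.shift 1).mul_measure_inter_exists_le_le (fun k ω => hpos _ ω) hA 1
    _ < ENNReal.ofReal (μ.real A) := by
      refine (ENNReal.ofReal_lt_ofReal_iff (ENNReal.toReal_pos hμA.ne' (measure_ne_top μ A))).2 ?_
      simpa only [one_mul, Measure.real] using setIntegral_lt_mul_measureReal (ℱ.le 1 A hA)
        hμA.ne' (measure_ne_top μ A) (hM.integrable 1).integrableOn fun ω hω => hω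
    _ = μ A := ofReal_measureReal
  have hdiff : 0 < μ (A \ B) :=
    pos_iff_ne_zero.2 fun h => hAB.not_ge (by simpa [h] using measure_le_inter_add_sdiff μ A B)
  refine hdiff.trans_le (measure_mono_ae ?_)
  filter_upwards [h0] with ω hω ⟨_, hωB⟩
  have hle : ∀ t, M t ω ≤ M 0 ω := by
    rintro (_ | k)
    exacts [le_rfl, hω ▸ (not_le.1 fun h => hωB ⟨k, h⟩).le]
  exact (ENNReal.iSup_ofReal_eq_of_le hle).trans (by simp [hω])
end
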